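/- If dim V = d < n, then the kernel of the algebra homomorphism ℂ[S_n] → End(V^⊗n) induced by the permutation action is the two-sided ideal generated by the antisymmetrizer A_{d+1} = Σ_{σ∈S_{d+1}} sign(σ)·σ, where S_{d+1} is embedded in S_n as permutations of the first d+1 letters. -/

import Mathlib

open scoped TensorProduct PiTensorProduct

/-- The monoid homomorphism `Sₙ → End(V^⊗n)` given by permuting tensor factors. -/
noncomputable def tensorPermHom (n : ℕ) (V : Type*) [AddCommGroup V] [Module ℂ V] :
    Equiv.Perm (Fin n) →* Module.End ℂ (⨂[ℂ] _ : Fin n, V) where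
  toFun σ := (PiTensorProduct.reindex ℂ (fun _ : Fin n => V) σ).toLinearMap
  map_one' := by
    ext x
    simp [Equiv.Perm.one_def, PiTensorProduct.reindex_refl]
  map_mul' σ τ := by
    ext x
    simp [Equiv.Perm.mul_def, ← PiTensorProduct.reindex_trans, LinearEquiv.trans_apply,
      Module.End.mul_apply]

/-- The antisymmetrizer `A_{d+1} = Σ_{σ ∈ S_{d+1}} sign(σ)·σ ∈ ℂ[Sₙ]`, where `S_{d+1}`
is embedded in `Sₙ` as the permutations of the first `d+1` letters (fixing the rest). -/
noncomputable def antisymmetrizer (n d : ℕ) (h : d + 1 ≤ n) :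
    MonoidAlgebra ℂ (Equiv.Perm (Fin n)) :=
  ∑ σ : Equiv.Perm (Fin (d + 1)), ((Equiv.Perm.sign σ : ℤ) : ℂ) •
    MonoidAlgebra.of ℂ (Equiv.Perm (Fin n))
      (σ.viaFintypeEmbedding (Fin.castLEEmb h))

/-!
`A_{d+1}` acts by zero on `V^⊗n` because `dim V < d + 1`: on a tensor of basis vectors two of the
first `d + 1` factors coincide, the transposition exchanging them fixes that tensor, and `A_{d+1}`
changes sign under it.

Conversely, if `σ` has a decreasing subsequence of length `d + 1` at the positions `e`, then
`σ · A_e`, which lies in the ideal since `A_e` is conjugate to `A_{d+1}`, is `σ` plus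
lexicographically smaller permutations. So modulo the ideal, `ℂ[Sₙ]` is spanned by the
permutations without such a subsequence, and these act linearly independently: colouring each
position `i` by the length of the longest decreasing subsequence of `σ` ending at `i` uses at
most `d ≤ dim V` colours, `σ` increases on each colour class, and so the matrix coefficient of the
action from `e_c` to `e_{c ∘ σ⁻¹}` sees only `σ` and lexicographically larger permutations.
-/
open Equiv Finset

namespace Equiv.Perm

section FirstMovedPoint

variable {α : Type*} [LinearOrder α] [WellFoundedLT α]

lemma exists_forall_lt_apply_eq_and_lt_apply {h : Perm α} (hh : h ≠ 1) :
    ∃ q, (∀ p < q, h p = p) ∧ q < h q := by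
  have hmoved : {p | h p ≠ p}.Nonempty := by
    contrapose! hh
    ext p
    simpa using Set.eq_empty_iff_forall_notMem.1 hh p
  obtain ⟨q, hq, hmin⟩ := wellFounded_lt.has_min _ hmoved
  have hfix : ∀ p < q, h p = p := fun p hp => by_contra fun hne => hmin p hne hp
  exact ⟨q, hfix, (lt_or_gt_of_ne (Ne.symm hq)).resolve_right
    fun hlt => hq (h.injective (hfix _ hlt))⟩

end FirstMovedPoint

section ViaFintypeEmbedding

variable {α β : Type*} [Fintype α] [DecidableEq β] (e : α ↪ β)

lemma viaFintypeEmbedding_mul (σ τ : Perm α) :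
    (σ * τ).viaFintypeEmbedding e = σ.viaFintypeEmbedding e * τ.viaFintypeEmbedding e :=
  (extendDomain_mul ..).symm

lemma viaFintypeEmbedding_eq_one_iff {τ : Perm α} : τ.viaFintypeEmbedding e = 1 ↔ τ = 1 :=
  extendDomain_eq_one_iff

lemma mem_range_of_viaFintypeEmbedding_apply_ne {τ : Perm α} {b : β}
    (hb : τ.viaFintypeEmbedding e b ≠ b) : b ∈ Set.range e :=
  by_contra fun h => hb (viaFintypeEmbedding_apply_notMem_range τ e h)

lemma viaFintypeEmbedding_smul (u : Perm β) (τ : Perm α) :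
    τ.viaFintypeEmbedding (u • e) = u * τ.viaFintypeEmbedding e * u⁻¹ := by
  ext b
  by_cases hb : b ∈ Set.range (u • e)
  · obtain ⟨a, rfl⟩ := hb
    rw [viaFintypeEmbedding_apply_image]
    simp [Function.Embedding.smul_apply, Perm.smul_def]
  · have hb' : u⁻¹ b ∉ Set.range e := fun ⟨a, ha⟩ =>
      hb ⟨a, by simp [Function.Embedding.smul_apply, Perm.smul_def, ha]⟩
    rw [Perm.mul_apply, Perm.mul_apply, viaFintypeEmbedding_apply_notMem_range _ _ hb,
      viaFintypeEmbedding_apply_notMem_range _ _ hb']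
    simp

end ViaFintypeEmbedding

section LexOrder

variable {β : Type*} [LinearOrder β] [WellFoundedLT β]

lemma toLex_lt_toLex_mul {σ h : Perm β} (hh : h ≠ 1)
    (hσ : ∀ q, q < h q → σ q < σ (h q)) : toLex ⇑σ < toLex ⇑(σ * h) := by
  obtain ⟨q, hfix, hq⟩ := exists_forall_lt_apply_eq_and_lt_apply hh
  exact ⟨q, fun p hp => by simp [hfix p hp], hσ q hq⟩

lemma toLex_mul_lt_toLex {σ h : Perm β} (hh : h ≠ 1)
    (hσ : ∀ q, q < h q → σ (h q) < σ q) : toLex ⇑(σ * h) < toLex ⇑σ := by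
  obtain ⟨q, hfix, hq⟩ := exists_forall_lt_apply_eq_and_lt_apply hh
  exact ⟨q, fun p hp => by simp [hfix p hp], hσ q hq⟩

lemma toLex_mul_viaFintypeEmbedding_lt {α : Type*} [Fintype α] {σ : Perm β} {e : α ↪ β}
    (he : StrictAntiOn σ (Set.range e)) {τ : Perm α} (hτ : τ ≠ 1) :
    toLex ⇑(σ * τ.viaFintypeEmbedding e) < toLex ⇑σ := by
  refine toLex_mul_lt_toLex (mt (viaFintypeEmbedding_eq_one_iff e).1 hτ) fun q hq => ?_
  obtain ⟨a, rfl⟩ := mem_range_of_viaFintypeEmbedding_apply_ne e hq.ne'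
  rw [viaFintypeEmbedding_apply_image] at hq ⊢
  exact he ⟨a, rfl⟩ ⟨τ a, rfl⟩ hq

end LexOrder

end Equiv.Perm

section DecreasingSubsequence

variable {α β : Type*} [LinearOrder α] [Fintype α] [LinearOrder β] {f : α → β}

def AvoidsDecreasing (k : ℕ) (f : α → β) : Prop :=
  ∀ P : Finset α, StrictAntiOn f P → #P < k

open Classical in
noncomputable def decreasingBefore (f : α → β) (i : α) : Finset (Finset α) :=
  univ.filter fun P => (∀ a ∈ P, a < i) ∧ StrictAntiOn f ↑(insert i P)

/-- One less than the length of a longest strictly decreasing subsequence of `f` ending at `i`. -/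
noncomputable def decreasingDepth (f : α → β) (i : α) : ℕ :=
  (decreasingBefore f i).sup card

lemma mem_decreasingBefore {i : α} {P : Finset α} :
    P ∈ decreasingBefore f i ↔ (∀ a ∈ P, a < i) ∧ StrictAntiOn f ↑(insert i P) := by
  simp [decreasingBefore]

lemma exists_mem_decreasingBefore_card_eq (f : α → β) (i : α) :
    ∃ P ∈ decreasingBefore f i, #P = decreasingDepth f i := by
  obtain ⟨P, hP, hcard⟩ :=
    exists_mem_eq_sup (decreasingBefore f i) ⟨∅, by simp [mem_decreasingBefore]⟩ card
  exact ⟨P, hP, hcard.symm⟩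

lemma decreasingDepth_lt {d : ℕ} (hf : AvoidsDecreasing (d + 1) f) (i : α) :
    decreasingDepth f i < d := by
  obtain ⟨P, hP, hcard⟩ := exists_mem_decreasingBefore_card_eq f i
  obtain ⟨hlt, hanti⟩ := mem_decreasingBefore.1 hP
  have := hf _ hanti
  rw [card_insert_of_notMem fun hi => lt_irrefl i (hlt i hi)] at this
  omega

lemma decreasingDepth_lt_decreasingDepth {i j : α} (hij : i < j) (hf : f j < f i) :
    decreasingDepth f i < decreasingDepth f j := by
  obtain ⟨P, hP, hcard⟩ := exists_mem_decreasingBefore_card_eq f i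
  obtain ⟨hlt, hanti⟩ := mem_decreasingBefore.1 hP
  have hmem : ∀ a ∈ insert i P, a < j := by
    simp only [mem_insert, forall_eq_or_imp]
    exact ⟨hij, fun a ha => (hlt a ha).trans hij⟩
  have hanti' : StrictAntiOn f ↑(insert j (insert i P)) := by
    rw [coe_insert, strictAntiOn_insert_iff]
    refine ⟨fun b hb _ => ?_, fun b hb hjb => absurd (hmem b hb) hjb.not_gt, hanti⟩
    rcases mem_insert.1 hb with rfl | hbP
    · exact hf
    · exact hf.trans (hanti (by simp [hbP]) (by simp) (hlt b hbP))
  have hle : #(insert i P) ≤ decreasingDepth f j :=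
    le_sup (f := card) (mem_decreasingBefore.2 ⟨hmem, hanti'⟩)
  rw [card_insert_of_notMem fun hi => lt_irrefl i (hlt i hi)] at hle
  omega

lemma AvoidsDecreasing.exists_coloring {d : ℕ} (hf : AvoidsDecreasing (d + 1) f) :
    ∃ c : α → Fin d, ∀ i j, i < j → c i = c j → f i ≤ f j :=
  ⟨fun i => ⟨decreasingDepth f i, decreasingDepth_lt hf i⟩, fun _ _ hij hc =>
    not_lt.1 fun hji => (decreasingDepth_lt_decreasingDepth hij hji).ne (congrArg Fin.val hc)⟩

end DecreasingSubsequence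

section Antisymmetrizer

variable {α β : Type*} [Fintype α] [DecidableEq α] [DecidableEq β]

open MonoidAlgebra Perm

noncomputable def antisymmetrizerAt (e : α ↪ β) : MonoidAlgebra ℂ (Perm β) :=
  ∑ τ : Perm α, ((sign τ : ℤ) : ℂ) • of ℂ (Perm β) (τ.viaFintypeEmbedding e)

lemma antisymmetrizer_eq_antisymmetrizerAt {n d : ℕ} (h : d + 1 ≤ n) :
    antisymmetrizer n d h = antisymmetrizerAt (Fin.castLEEmb h) :=
  rfl

lemma of_mul_antisymmetrizerAt (e : α ↪ β) (σ : Perm β) :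
    of ℂ (Perm β) σ * antisymmetrizerAt e =
      ∑ τ : Perm α, ((sign τ : ℤ) : ℂ) • of ℂ (Perm β) (σ * τ.viaFintypeEmbedding e) := by
  simp only [antisymmetrizerAt, mul_sum, mul_smul_comm, ← map_mul]

lemma antisymmetrizerAt_mul_of (e : α ↪ β) (τ : Perm α) :
    antisymmetrizerAt e * of ℂ (Perm β) (τ.viaFintypeEmbedding e) =
      ((sign τ : ℤ) : ℂ) • antisymmetrizerAt e := by
  simp only [antisymmetrizerAt, sum_mul, smul_mul_assoc, ← map_mul, ← viaFintypeEmbedding_mul,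
    smul_sum, smul_smul]
  refine Fintype.sum_equiv (Equiv.mulRight τ) _ _ fun ρ => ?_
  simp only [coe_mulRight, Perm.sign_mul, Units.val_mul, Int.cast_mul]
  rw [mul_left_comm, ← Int.cast_mul, ← Units.val_mul, Int.units_mul_self, Units.val_one,
    Int.cast_one, mul_one]

lemma of_mul_antisymmetrizerAt_mul_of_inv (e : α ↪ β) (u : Perm β) :
    of ℂ (Perm β) u * antisymmetrizerAt e * of ℂ (Perm β) u⁻¹ = antisymmetrizerAt (u • e) := by
  simp only [antisymmetrizerAt, mul_sum, sum_mul, mul_smul_comm, smul_mul_assoc, ← map_mul,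
    viaFintypeEmbedding_smul]

lemma antisymmetrizerAt_mem_span (e e' : α ↪ β) :
    antisymmetrizerAt e' ∈ TwoSidedIdeal.span {antisymmetrizerAt e} := by
  obtain ⟨u, rfl⟩ := Perm.exists_smul_eq_embedding e e'
  rw [← of_mul_antisymmetrizerAt_mul_of_inv]
  exact TwoSidedIdeal.mul_mem_right _ _ _
    (TwoSidedIdeal.mul_mem_left _ _ _ (TwoSidedIdeal.subset_span rfl))

end Antisymmetrizer

section TensorRepresentation

open MonoidAlgebra Perm

variable {n : ℕ} (V : Type*) [AddCommGroup V] [Module ℂ V]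

noncomputable abbrev tensorPermRep :
    MonoidAlgebra ℂ (Perm (Fin n)) →ₐ[ℂ] Module.End ℂ (⨂[ℂ] _ : Fin n, V) :=
  lift ℂ (Module.End ℂ (⨂[ℂ] _ : Fin n, V)) (Perm (Fin n)) (tensorPermHom n V)

variable {V}

lemma tensorPermHom_tprod (σ : Perm (Fin n)) (v : Fin n → V) :
    tensorPermHom n V σ (⨂ₜ[ℂ] i, v i) = ⨂ₜ[ℂ] i, v (σ⁻¹ i) :=
  PiTensorProduct.reindex_tprod σ v

lemma tensorPermRep_tprod (x : MonoidAlgebra ℂ (Perm (Fin n))) (v : Fin n → V) :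
    tensorPermRep V x (⨂ₜ[ℂ] i, v i) = ∑ σ, x.coeff σ • ⨂ₜ[ℂ] i, v (σ⁻¹ i) := by
  rw [lift_apply, Finsupp.sum_fintype _ _ (by simp), LinearMap.sum_apply]
  simp only [LinearMap.smul_apply, tensorPermHom_tprod]

lemma tensorPermRep_basis_repr {ι : Type*} [DecidableEq ι] (b : Module.Basis ι ℂ V)
    (x : MonoidAlgebra ℂ (Perm (Fin n))) (f g : Fin n → ι) :
    (Basis.piTensorProduct fun _ => b).repr
        (tensorPermRep V x (Basis.piTensorProduct (fun _ => b) f)) g =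
      ∑ σ : Perm (Fin n) with (fun i => f (σ⁻¹ i)) = g, x.coeff σ := by
  simp only [Basis.piTensorProduct_apply, tensorPermRep_tprod]
  simp only [← Basis.piTensorProduct_apply, map_sum, map_smul, Module.Basis.repr_self,
    Finsupp.finsetSum_apply, Finsupp.smul_apply, Finsupp.single_apply, smul_eq_mul, mul_ite,
    mul_one, mul_zero, sum_filter]

lemma tensorPermRep_antisymmetrizerAt [FiniteDimensional ℂ V] {α : Type*} [Fintype α]
    [DecidableEq α] (e : α ↪ Fin n) (hV : Module.finrank ℂ V < Fintype.card α) :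
    tensorPermRep V (antisymmetrizerAt e) = 0 := by
  let B := Basis.piTensorProduct fun _ : Fin n => Module.finBasis ℂ V
  refine B.ext fun f => ?_
  obtain ⟨a₁, a₂, hne, heq⟩ := Fintype.exists_ne_map_eq_of_card_lt (f ∘ e) (by simpa using hV)
  have hfs : ∀ i, f ((swap a₁ a₂).viaFintypeEmbedding e i) = f i := by
    intro i
    by_cases hi : i ∈ Set.range e
    · obtain ⟨a, rfl⟩ := hi
      rw [viaFintypeEmbedding_apply_image, swap_apply_def]
      split_ifs <;> simp_all
    · rw [viaFintypeEmbedding_apply_notMem_range _ _ hi]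
  have hfix : tensorPermRep V (of ℂ _ ((swap a₁ a₂).viaFintypeEmbedding e)) (B f) = B f := by
    simp only [B, Basis.piTensorProduct_apply, lift_of, tensorPermHom_tprod]
    congr! 2 with i
    rw [← hfs]
    simp
  have hneg := congrArg (fun y => tensorPermRep V y (B f)) (antisymmetrizerAt_mul_of e (swap a₁ a₂))
  simp only [map_mul, Module.End.mul_apply, hfix, sign_swap hne, Units.val_neg, Units.val_one,
    Int.cast_neg, Int.cast_one, neg_one_smul, map_neg, LinearMap.neg_apply] at hneg
  have htwo : (2 : ℂ) • tensorPermRep V (antisymmetrizerAt e) (B f) = 0 := by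
    rw [two_smul]
    nth_rewrite 1 [hneg]
    exact neg_add_cancel _
  exact (smul_eq_zero.1 htwo).resolve_left two_ne_zero

end TensorRepresentation

section Straightening

open MonoidAlgebra Perm

variable {n d : ℕ}

lemma of_mem_span_antisymmetrizer_sup_supported (h : d + 1 ≤ n) (σ : Perm (Fin n)) :
    of ℂ (Perm (Fin n)) σ ∈ (TwoSidedIdeal.span {antisymmetrizer n d h}).asIdeal.restrictScalars ℂ ⊔
      supported ℂ ℂ {σ : Perm (Fin n) | AvoidsDecreasing (d + 1) ⇑σ} := by
  induction σ using (InvImage.wf (fun σ : Perm (Fin n) => toLex ⇑σ) wellFounded_lt).induction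
    with | _ σ ih => ?_
  by_cases hσ : AvoidsDecreasing (d + 1) ⇑σ
  · rw [supported_eq_span_single]
    exact Submodule.mem_sup_right (Submodule.subset_span ⟨σ, hσ, rfl⟩)
  obtain ⟨P, hanti, hcard⟩ : ∃ P : Finset (Fin n), StrictAntiOn σ P ∧ #P = d + 1 := by
    simp only [AvoidsDecreasing, not_forall, not_lt] at hσ
    obtain ⟨P, hanti, hcard⟩ := hσ
    obtain ⟨Q, hQP, hQ⟩ := exists_subset_card_eq hcard
    exact ⟨Q, hanti.mono (coe_subset.2 hQP), hQ⟩
  let e := (P.orderEmbOfFin hcard).toEmbedding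
  have he : StrictAntiOn σ (Set.range e) := by simpa [e] using hanti
  have hexpand := of_mul_antisymmetrizerAt e σ
  rw [← add_sum_erase _ _ (mem_univ 1)] at hexpand
  simp only [Perm.sign_one, Units.val_one, Int.cast_one, one_smul,
    (viaFintypeEmbedding_eq_one_iff e).2 rfl, mul_one] at hexpand
  rw [eq_sub_of_add_eq hexpand.symm]
  refine Submodule.sub_mem _ (Submodule.mem_sup_left ?_) (Submodule.sum_mem _ fun τ hτ => ?_)
  · rw [Submodule.restrictScalars_mem, TwoSidedIdeal.mem_asIdeal,
      antisymmetrizer_eq_antisymmetrizerAt]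
    exact TwoSidedIdeal.mul_mem_left _ _ _ (antisymmetrizerAt_mem_span _ e)
  · exact Submodule.smul_mem _ _ (ih _ (toLex_mul_viaFintypeEmbedding_lt he (ne_of_mem_erase hτ)))

lemma span_antisymmetrizer_sup_supported_eq_top (h : d + 1 ≤ n) :
    (TwoSidedIdeal.span {antisymmetrizer n d h}).asIdeal.restrictScalars ℂ ⊔
      supported ℂ ℂ {σ : Perm (Fin n) | AvoidsDecreasing (d + 1) ⇑σ} = ⊤ := by
  rw [eq_top_iff, ← (MonoidAlgebra.basis (Perm (Fin n)) ℂ).span_eq, Submodule.span_le]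
  rintro _ ⟨σ, rfl⟩
  exact of_mem_span_antisymmetrizer_sup_supported h σ

end Straightening

section Independence

open MonoidAlgebra Perm

variable {n d : ℕ} {V : Type*} [AddCommGroup V] [Module ℂ V] [FiniteDimensional ℂ V]

lemma eq_zero_of_mem_supported_of_tensorPermRep_eq_zero (hV : d ≤ Module.finrank ℂ V)
    {w : MonoidAlgebra ℂ (Perm (Fin n))}
    (hw : w ∈ supported ℂ ℂ {σ : Perm (Fin n) | AvoidsDecreasing (d + 1) ⇑σ})
    (hρ : tensorPermRep V w = 0) : w = 0 := by
  classical
  suffices h : ∀ σ, w.coeff σ = 0 by ext σ; simpa using h σ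
  intro σ₀
  induction σ₀ using (InvImage.wf (fun σ : Perm (Fin n) => toLex ⇑σ) wellFounded_gt).induction
    with | _ σ₀ ih => ?_
  by_cases hσ₀ : AvoidsDecreasing (d + 1) ⇑σ₀
  swap
  · exact mem_supported'.1 hw σ₀ hσ₀
  obtain ⟨c, hc⟩ := hσ₀.exists_coloring
  let f : Fin n → Fin (Module.finrank ℂ V) := fun i => Fin.castLE hV (c i)
  have hsum := tensorPermRep_basis_repr (Module.finBasis ℂ V) w f fun i => f (σ₀⁻¹ i)
  rw [hρ, LinearMap.zero_apply, map_zero, Finsupp.coe_zero, Pi.zero_apply,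
    sum_eq_single_of_mem σ₀ (by simp) fun σ hσ hne => ?_] at hsum
  · exact hsum.symm
  obtain ⟨h, rfl⟩ : ∃ h, σ = σ₀ * h := ⟨σ₀⁻¹ * σ, by group⟩
  have hcol : ∀ i, c (h i) = c i := fun i => by
    simpa [f, Fin.castLE_inj] using (congrFun (mem_filter.1 hσ).2 (σ₀ (h i))).symm
  refine ih _ (toLex_lt_toLex_mul (fun h1 => hne (by rw [h1, mul_one])) fun q hq => ?_)
  exact (hc q _ hq (hcol q).symm).lt_of_ne (σ₀.injective.ne hq.ne)

end Independence

/-- If `dim V = d < n`, the kernel of `ℂ[Sₙ] → End(V^⊗n)` is the two-sided ideal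
generated by the antisymmetrizer `A_{d+1}`. -/
theorem kernel_eq_twoSidedIdeal_antisymmetrizer (n d : ℕ) (h : d < n) (V : Type*)
    [AddCommGroup V] [Module ℂ V] [FiniteDimensional ℂ V] (hV : Module.finrank ℂ V = d)
    (x : MonoidAlgebra ℂ (Equiv.Perm (Fin n))) :
    MonoidAlgebra.lift ℂ (Module.End ℂ (⨂[ℂ] _ : Fin n, V)) (Equiv.Perm (Fin n))
        (tensorPermHom n V) x = 0 ↔
      x ∈ TwoSidedIdeal.span {antisymmetrizer n d h} := by
  have hspan :
      TwoSidedIdeal.span {antisymmetrizer n d h} ≤ TwoSidedIdeal.ker (tensorPermRep V) := by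
    rw [TwoSidedIdeal.span_le, Set.singleton_subset_iff, SetLike.mem_coe, TwoSidedIdeal.mem_ker,
      antisymmetrizer_eq_antisymmetrizerAt]
    exact tensorPermRep_antisymmetrizerAt _ (by simp [hV])
  refine ⟨fun hx => ?_, fun hx => (TwoSidedIdeal.mem_ker _).1 (hspan hx)⟩
  obtain ⟨y, hy, w, hw, rfl⟩ := Submodule.mem_sup.1
    ((span_antisymmetrizer_sup_supported_eq_top h).symm ▸ Submodule.mem_top : x ∈ _)
  rw [Submodule.restrictScalars_mem, TwoSidedIdeal.mem_asIdeal] at hy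
  have hw0 : w = 0 := by
    refine eq_zero_of_mem_supported_of_tensorPermRep_eq_zero hV.ge hw ?_
    rwa [map_add, (TwoSidedIdeal.mem_ker _).1 (hspan hy), zero_add] at hx
  rwa [hw0, add_zero]
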